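/- arXiv:2111.05444 — 6 statements merged into one kernel-verified Lean document; each statement's English description precedes it below -/
import Mathlib

section
/- For a continuous convex function J : ℝⁿ → ℝ and a point x₀, the closure of the descent cone 𝒟_J(x₀) = cone{x − x₀ : J(x) ≤ J(x₀)} is contained in the critical cone 𝒞_J(x₀) = {w : dJ(x₀)(w) ≤ 0}. If moreover 0 ∉ ∂J(x₀), then cl(𝒟_J(x₀)) = 𝒞_J(x₀). -/
open RealInnerProductSpace

/-- Directional derivative of a convex function. -/
noncomputable def dirDeriv {n : ℕ} (J : EuclideanSpace ℝ (Fin n) → ℝ)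
    (x w : EuclideanSpace ℝ (Fin n)) : ℝ :=
  sInf {r : ℝ | ∃ t : ℝ, 0 < t ∧ r = (J (x + t • w) - J x) / t}

/-- Descent cone: conical hull of `{x - x₀ : J x ≤ J x₀}`. -/
def descentCone {n : ℕ} (J : EuclideanSpace ℝ (Fin n) → ℝ)
    (x₀ : EuclideanSpace ℝ (Fin n)) : Set (EuclideanSpace ℝ (Fin n)) :=
  {w | ∃ t : ℝ, 0 ≤ t ∧ ∃ x, J x ≤ J x₀ ∧ w = t • (x - x₀)}

/-- Critical cone: directions of nonpositive directional derivative. -/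
def criticalCone {n : ℕ} (J : EuclideanSpace ℝ (Fin n) → ℝ)
    (x₀ : EuclideanSpace ℝ (Fin n)) : Set (EuclideanSpace ℝ (Fin n)) :=
  {w | dirDeriv J x₀ w ≤ 0}

/-- Convex subdifferential. -/
def subdiff {n : ℕ} (J : EuclideanSpace ℝ (Fin n) → ℝ)
    (x₀ : EuclideanSpace ℝ (Fin n)) : Set (EuclideanSpace ℝ (Fin n)) :=
  {v | ∀ u, J u ≥ J x₀ + ⟪v, u - x₀⟫}

namespace DescentConeAux

variable {n : ℕ} {J : EuclideanSpace ℝ (Fin n) → ℝ}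
  {x₀ : EuclideanSpace ℝ (Fin n)}

/-- The difference quotient. -/
noncomputable def Q (J : EuclideanSpace ℝ (Fin n) → ℝ)
    (x₀ w : EuclideanSpace ℝ (Fin n)) (t : ℝ) : ℝ :=
  (J (x₀ + t • w) - J x₀) / t

lemma dirDeriv_eq (w : EuclideanSpace ℝ (Fin n)) :
    dirDeriv J x₀ w = sInf {r : ℝ | ∃ t : ℝ, 0 < t ∧ r = Q J x₀ w t} := rfl

lemma quotSet_nonempty (w : EuclideanSpace ℝ (Fin n)) :
    {r : ℝ | ∃ t : ℝ, 0 < t ∧ r = Q J x₀ w t}.Nonempty :=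
  ⟨Q J x₀ w 1, 1, one_pos, rfl⟩

/-- Monotonicity of the difference quotient. -/
lemma Q_mono (hconv : ConvexOn ℝ Set.univ J) (w : EuclideanSpace ℝ (Fin n))
    {s t : ℝ} (hs : 0 < s) (hst : s ≤ t) : Q J x₀ w s ≤ Q J x₀ w t := by
  have ht : 0 < t := hs.trans_le hst
  have h1 : (0:ℝ) ≤ 1 - s / t := by
    rw [sub_nonneg]; exact div_le_one_of_le₀ hst ht.le
  have h2 : (0:ℝ) ≤ s / t := by positivity
  have key := hconv.2 (Set.mem_univ x₀) (Set.mem_univ (x₀ + t • w)) h1 h2 (by ring)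
  have hpt : (1 - s / t) • x₀ + (s / t) • (x₀ + t • w) = x₀ + s • w := by
    rw [smul_add, smul_smul, div_mul_cancel₀ _ ht.ne']
    module
  rw [hpt] at key
  simp only [smul_eq_mul] at key
  have h3 : J (x₀ + s • w) - J x₀ ≤ (s / t) * (J (x₀ + t • w) - J x₀) := by nlinarith
  rw [Q, Q, div_le_div_iff₀ hs ht]
  have hst' : s / t * t = s := div_mul_cancel₀ _ ht.ne'
  calc (J (x₀ + s • w) - J x₀) * t ≤ (s / t * (J (x₀ + t • w) - J x₀)) * t :=
        mul_le_mul_of_nonneg_right h3 ht.le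
    _ = (J (x₀ + t • w) - J x₀) * s := by
        rw [mul_comm (s/t) _, mul_assoc, hst']

/-- Lower bound on quotients. -/
lemma Q_lower (hconv : ConvexOn ℝ Set.univ J) (w : EuclideanSpace ℝ (Fin n))
    {t : ℝ} (ht : 0 < t) :
    min (Q J x₀ w 1) (-(Q J x₀ (-w) 1)) ≤ Q J x₀ w t := by
  rcases le_or_gt 1 t with h1 | h1
  · exact le_trans (min_le_left _ _) (Q_mono hconv w one_pos h1)
  · refine le_trans (min_le_right _ _) ?_
    have hneg : -(Q J x₀ (-w) t) ≤ Q J x₀ w t := by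
      have key := hconv.2 (Set.mem_univ (x₀ + t • w)) (Set.mem_univ (x₀ + t • (-w)))
        (by norm_num : (0:ℝ) ≤ 1/2) (by norm_num : (0:ℝ) ≤ 1/2) (by norm_num)
      have hpt : (1/2 : ℝ) • (x₀ + t • w) + (1/2 : ℝ) • (x₀ + t • (-w)) = x₀ := by module
      rw [hpt] at key
      simp only [smul_eq_mul] at key
      rw [Q, Q, ← neg_div, div_le_div_iff₀ ht ht]
      nlinarith
    have : Q J x₀ (-w) t ≤ Q J x₀ (-w) 1 := Q_mono hconv (-w) ht h1.le
    linarith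
  
lemma quotSet_bddBelow (hconv : ConvexOn ℝ Set.univ J) (w : EuclideanSpace ℝ (Fin n)) :
    BddBelow {r : ℝ | ∃ t : ℝ, 0 < t ∧ r = Q J x₀ w t} := by
  refine ⟨min (Q J x₀ w 1) (-(Q J x₀ (-w) 1)), ?_⟩
  rintro r ⟨t, ht, rfl⟩
  exact Q_lower hconv w ht

lemma dirDeriv_le_Q (hconv : ConvexOn ℝ Set.univ J) (w : EuclideanSpace ℝ (Fin n))
    {t : ℝ} (ht : 0 < t) : dirDeriv J x₀ w ≤ Q J x₀ w t :=
  csInf_le (quotSet_bddBelow hconv w) ⟨t, ht, rfl⟩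

/-- Convexity of the quotient in `w`. -/
lemma Q_convex (hconv : ConvexOn ℝ Set.univ J) {t : ℝ} (ht : 0 < t)
    (a b : EuclideanSpace ℝ (Fin n)) {p q : ℝ} (hp : 0 ≤ p) (hq : 0 ≤ q)
    (hpq : p + q = 1) :
    Q J x₀ (p • a + q • b) t ≤ p * Q J x₀ a t + q * Q J x₀ b t := by
  have key := hconv.2 (Set.mem_univ (x₀ + t • a)) (Set.mem_univ (x₀ + t • b)) hp hq hpq
  have hpt : p • (x₀ + t • a) + q • (x₀ + t • b) = x₀ + t • (p • a + q • b) := by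
    rw [show x₀ + t • (p • a + q • b) = (p + q) • x₀ + t • (p • a + q • b) by
      rw [hpq, one_smul]]
    module
  rw [hpt] at key
  simp only [smul_eq_mul] at key
  rw [Q, Q, Q, show p * ((J (x₀ + t • a) - J x₀) / t) + q * ((J (x₀ + t • b) - J x₀) / t)
      = (p * (J (x₀ + t • a) - J x₀) + q * (J (x₀ + t • b) - J x₀)) / t by ring]
  gcongr
  have h0 : p * J x₀ + q * J x₀ = J x₀ := by rw [← add_mul, hpq, one_mul]
  linarith

lemma dirDeriv_convexOn (hconv : ConvexOn ℝ Set.univ J) :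
    ConvexOn ℝ Set.univ (dirDeriv J x₀) := by
  refine ⟨convex_univ, fun a _ b _ p q hp hq hpq => ?_⟩
  apply le_of_forall_pos_le_add
  intro ε hε
  obtain ⟨r₁, ⟨t₁, ht₁, rfl⟩, hr₁⟩ :=
    Real.lt_sInf_add_pos (quotSet_nonempty (x₀ := x₀) a) hε
  obtain ⟨r₂, ⟨t₂, ht₂, rfl⟩, hr₂⟩ :=
    Real.lt_sInf_add_pos (quotSet_nonempty (x₀ := x₀) b) hε
  set t := min t₁ t₂ with htdef
  have ht : 0 < t := lt_min ht₁ ht₂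
  have h1 : dirDeriv J x₀ (p • a + q • b) ≤ Q J x₀ (p • a + q • b) t :=
    dirDeriv_le_Q hconv _ ht
  have h2 : Q J x₀ (p • a + q • b) t ≤ p * Q J x₀ a t + q * Q J x₀ b t :=
    Q_convex hconv ht a b hp hq hpq
  have h3 : Q J x₀ a t ≤ Q J x₀ a t₁ := Q_mono hconv a ht (min_le_left _ _)
  have h4 : Q J x₀ b t ≤ Q J x₀ b t₂ := Q_mono hconv b ht (min_le_right _ _)
  have h5 : Q J x₀ a t₁ < dirDeriv J x₀ a + ε := hr₁
  have h6 : Q J x₀ b t₂ < dirDeriv J x₀ b + ε := hr₂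
  have h7 : p * Q J x₀ a t ≤ p * (dirDeriv J x₀ a + ε) :=
    mul_le_mul_of_nonneg_left (h3.trans h5.le) hp
  have h8 : q * Q J x₀ b t ≤ q * (dirDeriv J x₀ b + ε) :=
    mul_le_mul_of_nonneg_left (h4.trans h6.le) hq
  have : p * (dirDeriv J x₀ a + ε) + q * (dirDeriv J x₀ b + ε)
      = p * dirDeriv J x₀ a + q * dirDeriv J x₀ b + (p + q) * ε := by ring
  rw [hpq, one_mul] at this
  simp only [smul_eq_mul]
  linarith

lemma dirDeriv_continuous (hconv : ConvexOn ℝ Set.univ J) :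
    Continuous (dirDeriv J x₀) := by
  rw [← continuousOn_univ]
  exact (dirDeriv_convexOn hconv).continuousOn isOpen_univ

lemma mem_descentCone_of_neg (hconv : ConvexOn ℝ Set.univ J)
    {w : EuclideanSpace ℝ (Fin n)} (hw : dirDeriv J x₀ w < 0) :
    w ∈ descentCone J x₀ := by
  obtain ⟨r, ⟨t, ht, rfl⟩, hr⟩ :=
    exists_lt_of_csInf_lt (quotSet_nonempty (x₀ := x₀) w) hw
  have hX : J (x₀ + t • w) - J x₀ < 0 := by
    by_contra h
    push_neg at h
    exact absurd hr (not_lt.2 (div_nonneg h ht.le))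
  refine ⟨t⁻¹, by positivity, x₀ + t • w, by linarith, ?_⟩
  rw [add_sub_cancel_left, smul_smul, inv_mul_cancel₀ ht.ne', one_smul]

end DescentConeAux

/-- The closure of the descent cone is contained in the critical cone; if moreover
`0 ∉ ∂J(x₀)`, the two cones coincide. -/
theorem closure_descentCone_subset_criticalCone
    {n : ℕ} (J : EuclideanSpace ℝ (Fin n) → ℝ)
    (hconv : ConvexOn ℝ Set.univ J) (hcont : Continuous J)
    (x₀ : EuclideanSpace ℝ (Fin n)) :
    closure (descentCone J x₀) ⊆ criticalCone J x₀ ∧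
    ((0 : EuclideanSpace ℝ (Fin n)) ∉ subdiff J x₀ →
      closure (descentCone J x₀) = criticalCone J x₀) := by
  classical
  open DescentConeAux in
  have hclosed : IsClosed (criticalCone J x₀) :=
    IsClosed.preimage (dirDeriv_continuous hconv) isClosed_Iic
  have hsub : descentCone J x₀ ⊆ criticalCone J x₀ := by
    rintro w ⟨t, ht, x, hx, rfl⟩
    rcases eq_or_lt_of_le ht with h0 | ht'
    · show dirDeriv J x₀ ((t : ℝ) • (x - x₀)) ≤ 0
      have h := dirDeriv_le_Q (x₀ := x₀) hconv (t • (x - x₀)) one_pos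
      rw [← h0, zero_smul] at h ⊢
      simpa [Q] using h
    · show dirDeriv J x₀ ((t : ℝ) • (x - x₀)) ≤ 0
      have h := dirDeriv_le_Q (x₀ := x₀) hconv (t • (x - x₀)) (inv_pos.2 ht')
      refine h.trans ?_
      have hxx : x₀ + t⁻¹ • t • (x - x₀) = x := by
        rw [smul_smul, inv_mul_cancel₀ ht'.ne', one_smul]; abel
      rw [Q, hxx]
      exact div_nonpos_of_nonpos_of_nonneg (by linarith) (inv_pos.2 ht').le
  have part1 : closure (descentCone J x₀) ⊆ criticalCone J x₀ :=
    closure_minimal hsub hclosed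
  refine ⟨part1, fun h0 => ?_⟩
  refine Set.Subset.antisymm part1 ?_
  intro w hw
  have hw' : dirDeriv J x₀ w ≤ 0 := hw
  simp only [subdiff, Set.mem_setOf_eq] at h0
  push_neg at h0
  obtain ⟨u, hu⟩ := h0
  have hu' : J u < J x₀ := by
    simpa [inner_zero_left] using hu
  have hgu : dirDeriv J x₀ (u - x₀) < 0 := by
    have h := dirDeriv_le_Q (x₀ := x₀) hconv (u - x₀) one_pos
    refine lt_of_le_of_lt h ?_
    rw [Q, one_smul, add_sub_cancel, div_one]
    linarith
  have hcomb : ∀ θ : ℝ, 0 < θ → θ ≤ 1 →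
      θ • (u - x₀) + (1 - θ) • w ∈ descentCone J x₀ := by
    intro θ hθ hθ1
    apply mem_descentCone_of_neg hconv
    have hc := (dirDeriv_convexOn (x₀ := x₀) hconv).2 (Set.mem_univ (u - x₀))
      (Set.mem_univ w) hθ.le (show (0:ℝ) ≤ 1 - θ by linarith) (by ring)
    simp only [smul_eq_mul] at hc
    have h1 : θ * dirDeriv J x₀ (u - x₀) < 0 := mul_neg_of_pos_of_neg hθ hgu
    have h2 : (1 - θ) * dirDeriv J x₀ w ≤ 0 :=
      mul_nonpos_of_nonneg_of_nonpos (by linarith) hw'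
    calc dirDeriv J x₀ (θ • (u - x₀) + (1 - θ) • w)
        ≤ θ * dirDeriv J x₀ (u - x₀) + (1 - θ) * dirDeriv J x₀ w := hc
      _ < 0 := by linarith
  have hθk : ∀ k : ℕ, (0:ℝ) < ((k:ℝ) + 1)⁻¹ ∧ ((k:ℝ) + 1)⁻¹ ≤ 1 := by
    intro k
    constructor
    · positivity
    · rw [inv_le_one_iff₀]
      right
      have : (0:ℝ) ≤ (k:ℝ) := Nat.cast_nonneg k
      linarith
  have htend : Filter.Tendsto
      (fun k : ℕ => (((k:ℝ) + 1)⁻¹) • (u - x₀) + (1 - ((k:ℝ) + 1)⁻¹) • w)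
      Filter.atTop (nhds w) := by
    have h1 : Filter.Tendsto (fun k : ℕ => ((k:ℝ) + 1)⁻¹) Filter.atTop (nhds 0) := by
      simpa using tendsto_one_div_add_atTop_nhds_zero_nat (𝕜 := ℝ)
    have h2 : Continuous (fun θ : ℝ => θ • (u - x₀) + (1 - θ) • w) := by
      continuity
    have h3 := (h2.tendsto 0).comp h1
    simpa [Function.comp_def] using h3
  exact mem_closure_of_tendsto htend
    (Filter.Eventually.of_forall fun k => hcomb _ (hθk k).1 (hθk k).2)
end

section
/- Let J = σ_C be the support function of a nonempty compact convex set C ⊂ ℝⁿ with 0 ∈ ri C. Then for every x₀ ∈ ℝⁿ, the closure of the descent cone 𝒟_J(x₀) equals the critical cone 𝒞_J(x₀). -/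
open RealInnerProductSpace

/-!
`σ_C` is finite, sublinear and Lipschitz, so its directional derivative at `x₀` is Lipschitz in
the direction; hence the critical cone is closed, and it contains the descent cone. Conversely,
let `w` be critical. If some `x₁` has `σ_C x₁ < σ_C x₀`, convexity makes `w + c • (x₁ - x₀)` a
descent direction for every `c > 0`, and `c → 0` puts `w` in the closure. Otherwise
`σ_C x₀ = 0`, and `0 ∈ ri C` forces `σ_C (-x₀) = 0`; subadditivity then gives
`σ_C w ≤ σ_C'(x₀; w) ≤ 0`, so `x₀ + w` is itself a descent point.
-/

open Filter Topology Pointwise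

section IntrinsicInterior

variable {E : Type*} [NormedAddCommGroup E] [NormedSpace ℝ E] {C : Set E} {v : E}

lemma eventually_smul_mem_of_zero_mem_intrinsicInterior (h0 : (0 : E) ∈ intrinsicInterior ℝ C)
    (hv : v ∈ C) : ∀ᶠ t in 𝓝 (0 : ℝ), t • v ∈ C := by
  obtain ⟨y, hy, hy0⟩ := mem_intrinsicInterior.1 h0
  have hC0 : (0 : E) ∈ affineSpan ℝ C := subset_affineSpan ℝ C (intrinsicInterior_subset h0)
  have hdir : v ∈ (affineSpan ℝ C).direction := by
    simpa using AffineSubspace.vsub_mem_direction (subset_affineSpan ℝ C hv) hC0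
  have hspan (t : ℝ) : t • v ∈ affineSpan ℝ C := by
    simpa using AffineSubspace.vadd_mem_of_mem_direction (Submodule.smul_mem _ t hdir) hC0
  let g : ℝ → affineSpan ℝ C := fun t => ⟨t • v, hspan t⟩
  have hg : Tendsto g (𝓝 0) (𝓝 y) := by
    have hg0 : g 0 = y := Subtype.ext (by simp [g, hy0])
    exact hg0 ▸ (Continuous.subtype_mk (continuous_id.smul continuous_const) _).tendsto 0
  exact hg.eventually (mem_interior_iff_mem_nhds.1 hy)

end IntrinsicInterior

section SupportFunction

variable {E : Type*} [NormedAddCommGroup E] [InnerProductSpace ℝ E] {C : Set E} {v x : E}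

noncomputable def supportFunction (C : Set E) (x : E) : ℝ :=
  sSup ((fun v => ⟪v, x⟫) '' C)

lemma Bornology.IsBounded.bddAbove_image_inner (hC : Bornology.IsBounded C) (x : E) :
    BddAbove ((fun v => ⟪v, x⟫) '' C) := by
  obtain ⟨R, hR⟩ := hC.exists_norm_le
  refine ⟨R * ‖x‖, ?_⟩
  rintro _ ⟨v, hv, rfl⟩
  exact (real_inner_le_norm v x).trans (by gcongr; exact hR v hv)

lemma inner_le_supportFunction (hC : Bornology.IsBounded C) (hv : v ∈ C) :
    ⟪v, x⟫ ≤ supportFunction C x :=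
  le_csSup (hC.bddAbove_image_inner x) ⟨v, hv, rfl⟩

lemma supportFunction_le {a : ℝ} (hne : C.Nonempty) (h : ∀ v ∈ C, ⟪v, x⟫ ≤ a) :
    supportFunction C x ≤ a :=
  csSup_le (hne.image _) (by rintro _ ⟨v, hv, rfl⟩; exact h v hv)

lemma supportFunction_nonneg (hC : Bornology.IsBounded C) (h0 : (0 : E) ∈ C) (x : E) :
    0 ≤ supportFunction C x := by
  simpa using inner_le_supportFunction (x := x) hC h0

lemma supportFunction_smul (C : Set E) {t : ℝ} (ht : 0 ≤ t) (x : E) :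
    supportFunction C (t • x) = t * supportFunction C x := by
  have himage : (fun v => ⟪v, t • x⟫) '' C = t • ((fun v => ⟪v, x⟫) '' C) := by
    simp only [real_inner_smul_right, ← Set.image_smul, Set.image_image, smul_eq_mul]
  rw [supportFunction, himage, Real.sSup_smul_of_nonneg ht, smul_eq_mul, supportFunction]

lemma supportFunction_zero (C : Set E) : supportFunction C 0 = 0 := by
  simpa using supportFunction_smul C le_rfl 0

lemma supportFunction_add_le (hne : C.Nonempty) (hC : Bornology.IsBounded C) (x y : E) :
    supportFunction C (x + y) ≤ supportFunction C x + supportFunction C y :=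
  supportFunction_le hne fun v hv => by
    rw [inner_add_right]
    exact add_le_add (inner_le_supportFunction hC hv) (inner_le_supportFunction hC hv)

lemma convexOn_supportFunction (hne : C.Nonempty) (hC : Bornology.IsBounded C) :
    ConvexOn ℝ Set.univ (supportFunction C) := by
  refine ⟨convex_univ, fun x _ y _ a b ha hb _ => ?_⟩
  calc supportFunction C (a • x + b • y)
      ≤ supportFunction C (a • x) + supportFunction C (b • y) := supportFunction_add_le hne hC _ _
    _ = a • supportFunction C x + b • supportFunction C y := by
      rw [supportFunction_smul C ha, supportFunction_smul C hb, smul_eq_mul, smul_eq_mul]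

lemma exists_lipschitzWith_supportFunction (hne : C.Nonempty) (hC : Bornology.IsBounded C) :
    ∃ K, LipschitzWith K (supportFunction C) := by
  obtain ⟨R, hR⟩ := hC.exists_norm_le
  refine ⟨_, LipschitzWith.of_le_add_mul' R fun x y => supportFunction_le hne fun v hv => ?_⟩
  calc ⟪v, x⟫ = ⟪v, y⟫ + ⟪v, x - y⟫ := by rw [inner_sub_right]; ring
    _ ≤ supportFunction C y + R * dist x y := by
      gcongr
      · exact inner_le_supportFunction hC hv
      · rw [dist_eq_norm]
        exact (real_inner_le_norm v _).trans (by gcongr; exact hR v hv)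

lemma supportFunction_neg_eq_zero (hC : Bornology.IsBounded C)
    (h0 : (0 : E) ∈ intrinsicInterior ℝ C) (hx : supportFunction C x = 0) :
    supportFunction C (-x) = 0 := by
  have hC0 : (0 : E) ∈ C := intrinsicInterior_subset h0
  refine le_antisymm (supportFunction_le ⟨0, hC0⟩ fun v hv => ?_) (supportFunction_nonneg hC hC0 _)
  obtain ⟨t, ht, htv⟩ := (eventually_smul_mem_of_zero_mem_intrinsicInterior h0 hv).exists_lt
  have h : t * ⟪v, x⟫ ≤ 0 := by
    simpa [real_inner_smul_left, hx] using inner_le_supportFunction (x := x) hC htv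
  rw [inner_neg_right, neg_nonpos]
  exact nonneg_of_mul_nonpos_right h ht

end SupportFunction

section DirectionalDerivative

variable {n : ℕ} {f : EuclideanSpace ℝ (Fin n) → ℝ} {K : NNReal}
  {x x₀ x₁ w : EuclideanSpace ℝ (Fin n)}

lemma le_dirDeriv {a : ℝ} (h : ∀ t, 0 < t → a ≤ (f (x + t • w) - f x) / t) :
    a ≤ dirDeriv f x w :=
  le_csInf ⟨_, 1, one_pos, rfl⟩ (by rintro _ ⟨t, ht, rfl⟩; exact h t ht)

lemma exists_lt_of_dirDeriv_lt {a : ℝ} (h : dirDeriv f x w < a) :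
    ∃ t, 0 < t ∧ (f (x + t • w) - f x) / t < a := by
  unfold dirDeriv at h
  obtain ⟨_, ⟨t, ht, rfl⟩, hlt⟩ := exists_lt_of_csInf_lt (by exact ⟨_, 1, one_pos, rfl⟩) h
  exact ⟨t, ht, hlt⟩

lemma LipschitzWith.dirDeriv_le (hf : LipschitzWith K f) {t : ℝ} (ht : 0 < t) :
    dirDeriv f x w ≤ (f (x + t • w) - f x) / t := by
  unfold dirDeriv
  refine csInf_le ⟨-(K * ‖w‖), ?_⟩ ⟨t, ht, rfl⟩
  rintro _ ⟨s, hs, rfl⟩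
  have hlip := hf.le_add_mul x (x + s • w)
  rw [dist_self_add_right, norm_smul, Real.norm_of_nonneg hs.le] at hlip
  rw [le_div_iff₀ hs]
  linarith

lemma LipschitzWith.lipschitzWith_dirDeriv (hf : LipschitzWith K f)
    (x : EuclideanSpace ℝ (Fin n)) :
    LipschitzWith K (dirDeriv f x) := by
  refine LipschitzWith.of_le_add_mul K fun w w' => sub_le_iff_le_add.1 ?_
  refine le_dirDeriv fun t ht => ?_
  have hlip := hf.le_add_mul (x + t • w) (x + t • w')
  rw [dist_add_left, dist_smul₀, Real.norm_of_nonneg ht.le] at hlip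
  have hq := hf.dirDeriv_le (x := x) (w := w) ht
  rw [le_div_iff₀ ht] at hq ⊢
  nlinarith

lemma LipschitzWith.isClosed_criticalCone (hf : LipschitzWith K f)
    (x₀ : EuclideanSpace ℝ (Fin n)) :
    IsClosed (criticalCone f x₀) :=
  isClosed_le (hf.lipschitzWith_dirDeriv x₀).continuous continuous_const

lemma LipschitzWith.descentCone_subset_criticalCone (hf : LipschitzWith K f)
    (x₀ : EuclideanSpace ℝ (Fin n)) : descentCone f x₀ ⊆ criticalCone f x₀ := by
  rintro _ ⟨t, ht, x, hx, rfl⟩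
  change dirDeriv f x₀ _ ≤ 0
  rcases ht.eq_or_lt with rfl | ht
  · refine (hf.dirDeriv_le one_pos).trans ?_
    simp
  · refine (hf.dirDeriv_le (inv_pos.2 ht)).trans ?_
    rw [smul_smul, inv_mul_cancel₀ ht.ne', one_smul, add_sub_cancel]
    exact div_nonpos_of_nonpos_of_nonneg (sub_nonpos.2 hx) (inv_nonneg.2 ht.le)

lemma ConvexOn.add_smul_sub_mem_descentCone (hf : ConvexOn ℝ Set.univ f) (hx₁ : f x₁ < f x₀)
    (hw : w ∈ criticalCone f x₀) {c : ℝ} (hc : 0 < c) :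
    w + c • (x₁ - x₀) ∈ descentCone f x₀ := by
  obtain ⟨t, ht, hq⟩ := exists_lt_of_dirDeriv_lt (x := x₀) (w := w)
    (lt_of_le_of_lt hw (mul_pos hc (sub_pos.2 hx₁)))
  rw [div_lt_iff₀ ht] at hq
  -- `x₀ + t • w` nearly descends while `x₁` strictly descends; weighting them `1 : t * c`
  -- cancels the excess exactly.
  have hd : 0 < t * c + 1 := by positivity
  set a := 1 / (t * c + 1)
  set b := t * c / (t * c + 1)
  have hab : a + b = 1 := by rw [← add_div, div_eq_one_iff_eq hd.ne']; ring
  have hconv :=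
    hf.2 (Set.mem_univ (x₀ + t • w)) (Set.mem_univ x₁) (by positivity) (by positivity) hab
  refine ⟨(t * c + 1) / t, by positivity, a • (x₀ + t • w) + b • x₁, hconv.trans ?_, ?_⟩
  · simp only [smul_eq_mul, a, b]
    rw [div_mul_eq_mul_div, div_mul_eq_mul_div, ← add_div, div_le_iff₀ hd]
    linarith
  · simp only [a, b]
    match_scalars <;> field_simp
    ring

lemma ConvexOn.criticalCone_subset_closure_descentCone (hf : ConvexOn ℝ Set.univ f)
    (hx₁ : f x₁ < f x₀) : criticalCone f x₀ ⊆ closure (descentCone f x₀) := by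
  intro w hw
  have hlim : Tendsto (fun c : ℝ => w + c • (x₁ - x₀)) (𝓝[>] 0) (𝓝 w) :=
    ((continuous_const.add (continuous_id.smul continuous_const)).tendsto' 0 w
      (by simp)).mono_left nhdsWithin_le_nhds
  exact mem_closure_of_tendsto hlim
    (eventually_mem_nhdsWithin.mono fun c hc => hf.add_smul_sub_mem_descentCone hx₁ hw hc)

lemma criticalCone_subset_descentCone_of_eq_zero (hadd : ∀ x y, f (x + y) ≤ f x + f y)
    (hsmul : ∀ t : ℝ, 0 < t → ∀ x, f (t • x) = t * f x) (hx₀ : f x₀ = 0) (hneg : f (-x₀) = 0) :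
    criticalCone f x₀ ⊆ descentCone f x₀ := by
  intro w hw
  have hfw : f w ≤ 0 := by
    refine (le_dirDeriv fun t ht => ?_).trans hw
    rw [hx₀, sub_zero, le_div_iff₀ ht, mul_comm, ← hsmul t ht]
    simpa [hneg] using hadd (x₀ + t • w) (-x₀)
  refine ⟨1, zero_le_one, x₀ + w, ?_, by simp⟩
  linarith [hadd x₀ w]

end DirectionalDerivative

theorem closure_descentCone_eq_criticalCone_support_general
    {n : ℕ} (C : Set (EuclideanSpace ℝ (Fin n)))
    (hcomp : IsCompact C)
    (h0 : (0 : EuclideanSpace ℝ (Fin n)) ∈ intrinsicInterior ℝ C)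
    (J : EuclideanSpace ℝ (Fin n) → ℝ)
    (hJ : ∀ x, J x = sSup ((fun v => ⟪v, x⟫) '' C)) :
    ∀ x₀ : EuclideanSpace ℝ (Fin n),
      closure (descentCone J x₀) = criticalCone J x₀ := by
  intro x₀
  obtain rfl : J = supportFunction C := funext hJ
  have hC0 : (0 : EuclideanSpace ℝ (Fin n)) ∈ C := intrinsicInterior_subset h0
  have hbdd := hcomp.isBounded
  obtain ⟨K, hK⟩ := exists_lipschitzWith_supportFunction ⟨0, hC0⟩ hbdd
  refine (closure_minimal (hK.descentCone_subset_criticalCone x₀)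
    (hK.isClosed_criticalCone x₀)).antisymm ?_
  by_cases hmin : ∃ x₁, supportFunction C x₁ < supportFunction C x₀
  · obtain ⟨x₁, hx₁⟩ := hmin
    exact (convexOn_supportFunction ⟨0, hC0⟩ hbdd).criticalCone_subset_closure_descentCone hx₁
  · push Not at hmin
    have hx₀ : supportFunction C x₀ = 0 :=
      le_antisymm ((hmin 0).trans_eq (supportFunction_zero C))
        (supportFunction_nonneg hbdd hC0 x₀)
    exact (criticalCone_subset_descentCone_of_eq_zero (supportFunction_add_le ⟨0, hC0⟩ hbdd)
      (fun t ht => supportFunction_smul C ht.le) hx₀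
      (supportFunction_neg_eq_zero hbdd h0 hx₀)).trans subset_closure

/-- For the support function `J = σ_C` of a nonempty compact convex set `C` with
`0` in the relative interior of `C`, the closure of the descent cone equals the
critical cone at every point. -/
theorem closure_descentCone_eq_criticalCone_support
    {n : ℕ} (C : Set (EuclideanSpace ℝ (Fin n)))
    (hne : C.Nonempty) (hcomp : IsCompact C) (hconv : Convex ℝ C)
    (h0 : (0 : EuclideanSpace ℝ (Fin n)) ∈ intrinsicInterior ℝ C)
    (J : EuclideanSpace ℝ (Fin n) → ℝ)
    (hJ : ∀ x, J x = sSup ((fun v => ⟪v, x⟫) '' C)) :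
    ∀ x₀ : EuclideanSpace ℝ (Fin n),
      closure (descentCone J x₀) = criticalCone J x₀ :=
  closure_descentCone_eq_criticalCone_support_general C hcomp h0 J hJ
end

section
/- Let J : ℝⁿ → ℝ be continuous convex, Φ : ℝⁿ → ℝᵐ linear, y₀ = Φx₀. Then x₀ is a sharp minimizer of the problem min J(x) subject to Φx = y₀ if and only if Ker Φ ∩ 𝒞_J(x₀) = {0}, where 𝒞_J(x₀) = {w : dJ(x₀)(w) ≤ 0} is the critical cone. -/
namespace SharpAux

variable {n : ℕ} {J : EuclideanSpace ℝ (Fin n) → ℝ} {x₀ w v : EuclideanSpace ℝ (Fin n)}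

/-- The set of difference quotients. -/
def Q (J : EuclideanSpace ℝ (Fin n) → ℝ) (x₀ w : EuclideanSpace ℝ (Fin n)) : Set ℝ :=
  {r : ℝ | ∃ t : ℝ, 0 < t ∧ r = (J (x₀ + t • w) - J x₀) / t}

lemma dirDeriv_eq : dirDeriv J x₀ w = sInf (Q J x₀ w) := rfl

lemma Q_nonempty : (Q J x₀ w).Nonempty :=
  ⟨(J (x₀ + (1:ℝ) • w) - J x₀) / 1, 1, one_pos, rfl⟩

lemma Q_lb (hconv : ConvexOn ℝ Set.univ J) :
    ∀ r ∈ Q J x₀ w, J x₀ - J (x₀ - w) ≤ r := by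
  rintro r ⟨t, ht, rfl⟩
  have ht1 : (0:ℝ) < t + 1 := by linarith
  have hcomb : (t/(t+1)) • (x₀ - w) + (1/(t+1)) • (x₀ + t • w) = x₀ := by
    match_scalars <;> field_simp <;> ring
  have key := hconv.2 (Set.mem_univ (x₀ - w)) (Set.mem_univ (x₀ + t • w))
    (div_nonneg ht.le ht1.le) (div_nonneg zero_le_one ht1.le)
    (by field_simp)
  rw [hcomb, smul_eq_mul, smul_eq_mul] at key
  rw [le_div_iff₀ ht]
  have h2 := mul_le_mul_of_nonneg_right key ht1.le
  field_simp at h2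
  nlinarith


lemma Q_bddBelow (hconv : ConvexOn ℝ Set.univ J) : BddBelow (Q J x₀ w) :=
  ⟨J x₀ - J (x₀ - w), Q_lb hconv⟩

lemma quotient_mono (hconv : ConvexOn ℝ Set.univ J) {s t : ℝ} (hs : 0 < s) (hst : s ≤ t) :
    (J (x₀ + s • w) - J x₀) / s ≤ (J (x₀ + t • w) - J x₀) / t := by
  have ht : 0 < t := lt_of_lt_of_le hs hst
  have hcomb : (1 - s/t) • x₀ + (s/t) • (x₀ + t • w) = x₀ + s • w := by
    match_scalars <;> field_simp <;> ring
  have ha : (0:ℝ) ≤ 1 - s/t := by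
    have : s/t ≤ 1 := div_le_one_of_le₀ hst ht.le
    linarith
  have key := hconv.2 (Set.mem_univ x₀) (Set.mem_univ (x₀ + t • w))
    ha (div_nonneg hs.le ht.le) (by ring)
  rw [hcomb, smul_eq_mul, smul_eq_mul] at key
  rw [div_le_div_iff₀ hs ht]
  have h2 := mul_le_mul_of_nonneg_right key ht.le
  field_simp at h2
  nlinarith

lemma dd_le (hconv : ConvexOn ℝ Set.univ J) {t : ℝ} (ht : 0 < t) :
    dirDeriv J x₀ w ≤ (J (x₀ + t • w) - J x₀) / t :=
  csInf_le (Q_bddBelow hconv) ⟨t, ht, rfl⟩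

lemma dd_subadd (hconv : ConvexOn ℝ Set.univ J) (v w : EuclideanSpace ℝ (Fin n)) :
    dirDeriv J x₀ (v + w) ≤ dirDeriv J x₀ v + dirDeriv J x₀ w := by
  refine le_of_forall_pos_le_add fun ε hε => ?_
  obtain ⟨r₁, ⟨t₁, ht₁, rfl⟩, hr₁⟩ :=
    exists_lt_of_csInf_lt (Q_nonempty (w := v))
      (show sInf (Q J x₀ v) < dirDeriv J x₀ v + ε/2 by rw [← dirDeriv_eq]; linarith)
  obtain ⟨r₂, ⟨t₂, ht₂, rfl⟩, hr₂⟩ :=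
    exists_lt_of_csInf_lt (Q_nonempty (w := w))
      (show sInf (Q J x₀ w) < dirDeriv J x₀ w + ε/2 by rw [← dirDeriv_eq]; linarith)
  set t : ℝ := min t₁ t₂ with htdef
  have ht : 0 < t := lt_min ht₁ ht₂
  have hcomb : (1/2 : ℝ) • (x₀ + t • v) + (1/2 : ℝ) • (x₀ + t • w) = x₀ + (t/2) • (v + w) := by
    match_scalars <;> ring
  have key := hconv.2 (Set.mem_univ (x₀ + t • v)) (Set.mem_univ (x₀ + t • w))
    (by norm_num : (0:ℝ) ≤ 1/2) (by norm_num : (0:ℝ) ≤ 1/2) (by norm_num)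
  rw [hcomb, smul_eq_mul, smul_eq_mul] at key
  have step1 : dirDeriv J x₀ (v + w) ≤ (J (x₀ + (t/2) • (v + w)) - J x₀) / (t/2) :=
    dd_le hconv (half_pos ht)
  have step2 : (J (x₀ + (t/2) • (v + w)) - J x₀) / (t/2) ≤
      (J (x₀ + t • v) - J x₀) / t + (J (x₀ + t • w) - J x₀) / t := by
    rw [← add_div, div_le_div_iff₀ (half_pos ht) ht]
    nlinarith
  have step3 : (J (x₀ + t • v) - J x₀) / t ≤ (J (x₀ + t₁ • v) - J x₀) / t₁ :=
    quotient_mono hconv ht (min_le_left _ _)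
  have step4 : (J (x₀ + t • w) - J x₀) / t ≤ (J (x₀ + t₂ • w) - J x₀) / t₂ :=
    quotient_mono hconv ht (min_le_right _ _)
  linarith

lemma dd_zero : dirDeriv J x₀ 0 = 0 := by
  have h : Q J x₀ (0 : EuclideanSpace ℝ (Fin n)) = {0} := by
    ext r
    constructor
    · rintro ⟨t, ht, rfl⟩; simp
    · rintro rfl; exact ⟨1, one_pos, by simp⟩
  rw [dirDeriv_eq, h, csInf_singleton]

end SharpAux

open SharpAux in
/-- `x₀` is a sharp minimizer of `min J(x) s.t. Φx = Φx₀` iff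
`Ker Φ ∩ 𝒞_J(x₀) = {0}`. -/
theorem sharp_iff_ker_inter_criticalCone
    {n m : ℕ} (J : EuclideanSpace ℝ (Fin n) → ℝ)
    (hconv : ConvexOn ℝ Set.univ J) (hcont : Continuous J)
    (Φ : EuclideanSpace ℝ (Fin n) →ₗ[ℝ] EuclideanSpace ℝ (Fin m))
    (x₀ : EuclideanSpace ℝ (Fin n)) :
    (∃ c > 0, ∃ ε > 0, ∀ x, Φ x = Φ x₀ → ‖x - x₀‖ ≤ ε →
        J x ≥ J x₀ + c * ‖x - x₀‖) ↔
    (LinearMap.ker Φ : Set (EuclideanSpace ℝ (Fin n))) ∩ criticalCone J x₀ = {0} := by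
  constructor
  · rintro ⟨c, hc, ε, hε, hsharp⟩
    apply Set.eq_singleton_iff_unique_mem.mpr
    constructor
    · exact ⟨by simp [SetLike.mem_coe], by simp [criticalCone, dd_zero]⟩
    · rintro w ⟨hker, hcone⟩
      by_contra hw0
      have hwn : 0 < ‖w‖ := norm_pos_iff.mpr hw0
      have hΦw : Φ w = 0 := hker
      have hq : ∀ t : ℝ, 0 < t → c * ‖w‖ ≤ (J (x₀ + t • w) - J x₀) / t := by
        intro t ht
        rcases le_or_gt t (ε / ‖w‖) with h | h
        · have hfeas : Φ (x₀ + t • w) = Φ x₀ := by simp [map_add, map_smul, hΦw]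
          have hnorm : ‖(x₀ + t • w) - x₀‖ ≤ ε := by
            rw [add_sub_cancel_left, norm_smul, Real.norm_eq_abs, abs_of_pos ht]
            calc t * ‖w‖ ≤ (ε / ‖w‖) * ‖w‖ := by nlinarith
              _ = ε := div_mul_cancel₀ _ hwn.ne'
          have := hsharp _ hfeas hnorm
          rw [add_sub_cancel_left, norm_smul, Real.norm_eq_abs, abs_of_pos ht] at this
          rw [le_div_iff₀ ht]
          nlinarith
        · have hs : 0 < ε / ‖w‖ := div_pos hε hwn
          have h1 : c * ‖w‖ ≤ (J (x₀ + (ε / ‖w‖) • w) - J x₀) / (ε / ‖w‖) := by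
            have hfeas : Φ (x₀ + (ε / ‖w‖) • w) = Φ x₀ := by simp [map_add, map_smul, hΦw]
            have hnorm : ‖(x₀ + (ε / ‖w‖) • w) - x₀‖ ≤ ε := by
              rw [add_sub_cancel_left, norm_smul, Real.norm_eq_abs, abs_of_pos hs,
                div_mul_cancel₀ _ hwn.ne']
            have := hsharp _ hfeas hnorm
            rw [add_sub_cancel_left, norm_smul, Real.norm_eq_abs, abs_of_pos hs,
              div_mul_cancel₀ _ hwn.ne'] at this
            rw [le_div_iff₀ hs]
            calc c * ‖w‖ * (ε / ‖w‖) = c * ε := by field_simp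
              _ ≤ J (x₀ + (ε / ‖w‖) • w) - J x₀ := by linarith
          exact h1.trans (quotient_mono hconv hs h.le)
      have hdd : c * ‖w‖ ≤ dirDeriv J x₀ w := by
        rw [dirDeriv_eq]
        refine le_csInf Q_nonempty ?_
        rintro r ⟨t, ht, rfl⟩
        exact hq t ht
      have : dirDeriv J x₀ w ≤ 0 := hcone
      nlinarith
  · intro H
    set S : Set (EuclideanSpace ℝ (Fin n)) :=
      (LinearMap.ker Φ : Set (EuclideanSpace ℝ (Fin n))) ∩ Metric.sphere 0 1 with hSdef
    have hScomp : IsCompact S :=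
      (isCompact_sphere (0 : EuclideanSpace ℝ (Fin n)) 1).inter_left
        (LinearMap.ker Φ).closed_of_finiteDimensional
    have claim : ∃ c > 0, ∀ w ∈ S, c ≤ dirDeriv J x₀ w := by
      by_contra hcl
      push_neg at hcl
      choose w hwS hwlt using fun k : ℕ => hcl (((k:ℝ)+1)⁻¹) (by positivity)
      obtain ⟨z, hzS, φ, hφ, hconvz⟩ := hScomp.tendsto_subseq hwS
      have hz0 : dirDeriv J x₀ z ≤ 0 := by
        have : dirDeriv J x₀ z ≤ 0 + 0 := by
          refine le_of_forall_pos_le_add fun δ hδ => ?_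
          obtain ⟨k₁, hk₁⟩ := exists_nat_one_div_lt (half_pos hδ)
          have htd : Filter.Tendsto (fun k => J (x₀ + (z - w (φ k)))) Filter.atTop (nhds (J x₀)) := by
            have h1 : Filter.Tendsto (fun k => x₀ + (z - w (φ k))) Filter.atTop
                (nhds (x₀ + (z - z))) :=
              Filter.Tendsto.add tendsto_const_nhds (Filter.Tendsto.sub tendsto_const_nhds hconvz)
            simpa [Function.comp_def] using (hcont.tendsto _).comp h1
          have hev : ∀ᶠ k in Filter.atTop, J (x₀ + (z - w (φ k))) < J x₀ + δ/2 :=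
            htd.eventually_lt_const (by linarith)
          obtain ⟨k₂, hk₂⟩ := hev.exists_forall_of_atTop
          set k : ℕ := max k₁ k₂ with hkdef
          have h1 : dirDeriv J x₀ z ≤ dirDeriv J x₀ (w (φ k)) + dirDeriv J x₀ (z - w (φ k)) := by
            have := dd_subadd (x₀ := x₀) hconv (w (φ k)) (z - w (φ k))
            rwa [add_sub_cancel] at this
          have h2 : dirDeriv J x₀ (w (φ k)) < δ/2 := by
            have hk1k : ((φ k : ℝ) + 1)⁻¹ ≤ ((k₁ : ℝ) + 1)⁻¹ := by
              apply inv_anti₀ (by positivity)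
              have hle : k₁ ≤ φ k := le_trans (le_max_left _ _) hφ.le_apply
              exact_mod_cast Nat.succ_le_succ hle
            have hw := hwlt (φ k)
            rw [one_div] at hk₁
            linarith
          have h3 : dirDeriv J x₀ (z - w (φ k)) ≤ J (x₀ + (z - w (φ k))) - J x₀ := by
            have := dd_le (x₀ := x₀) (w := z - w (φ k)) hconv one_pos
            simpa using this
          have h4 : J (x₀ + (z - w (φ k))) - J x₀ < δ/2 := by
            have := hk₂ k (le_max_right _ _)
            linarith
          linarith
        linarith
      have hz : z ∈ ({(0 : EuclideanSpace ℝ (Fin n))} : Set _) := by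
        rw [← H]; exact ⟨hzS.1, hz0⟩
      have : ‖z‖ = 1 := mem_sphere_zero_iff_norm.mp hzS.2
      rw [Set.mem_singleton_iff] at hz
      rw [hz, norm_zero] at this
      norm_num at this
    obtain ⟨c, hcp, hcS⟩ := claim
    refine ⟨c, hcp, 1, one_pos, fun x hΦ hnorm => ?_⟩
    by_cases hx : x = x₀
    · subst hx; simp
    · have ht : 0 < ‖x - x₀‖ := norm_pos_iff.mpr (sub_ne_zero.mpr hx)
      have hwS : ‖x - x₀‖⁻¹ • (x - x₀) ∈ S := by
        constructor
        · show ‖x - x₀‖⁻¹ • (x - x₀) ∈ LinearMap.ker Φ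
          rw [LinearMap.mem_ker, map_smul, map_sub, hΦ, sub_self, smul_zero]
        · rw [mem_sphere_zero_iff_norm, norm_smul, Real.norm_eq_abs,
            abs_of_pos (inv_pos.mpr ht), inv_mul_cancel₀ ht.ne']
      have hx₀w : x₀ + ‖x - x₀‖ • (‖x - x₀‖⁻¹ • (x - x₀)) = x := by
        rw [smul_inv_smul₀ ht.ne', add_sub_cancel]
      have h1 := dd_le (x₀ := x₀) (w := ‖x - x₀‖⁻¹ • (x - x₀)) hconv ht
      rw [hx₀w] at h1
      have h2 : c ≤ (J x - J x₀) / ‖x - x₀‖ := le_trans (hcS _ hwS) h1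
      rw [le_div_iff₀ ht] at h2
      rw [ge_iff_le]
      linarith
end

section
/- With f convex, C² and with positive definite Hessian on int(dom f), J convex continuous, and x̄ a minimizer of Θ(x) = f(Φx) + μJ(x) with Φx̄ ∈ int(dom f): x̄ is the unique minimizer of Θ if and only if x̄ is the unique minimizer of J over {x : Φx = Φx̄}. -/
lemma second_deriv_zero_of_affine_on_line
    {E : Type*} [NormedAddCommGroup E] [NormedSpace ℝ E]
    {f : E → ℝ} {U : Set E} (hU : IsOpen U) (hf2 : ContDiffOn ℝ 2 f U)
    {z0 v : E} {c0 b : ℝ} {τ : ℝ} (hτ : τ ∈ Set.Ioo (0:ℝ) 1)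
    (hmem : z0 + τ • v ∈ U)
    (haff : ∀ t ∈ Set.Ioo (0:ℝ) 1, f (z0 + t • v) = c0 + t * b) :
    iteratedFDeriv ℝ 2 f (z0 + τ • v) ![v, v] = 0 := by
  set φ : ℝ → E := fun t => z0 + t • v with hφ
  have hφd : ∀ t : ℝ, HasDerivAt φ v t := by
    intro t
    simpa [hφ] using ((hasDerivAt_id t).smul_const v).const_add z0
  have hφc : Continuous φ := continuous_const.add (continuous_id.smul continuous_const)
  set I : Set ℝ := Set.Ioo (0:ℝ) 1 ∩ φ ⁻¹' U with hI
  have hIopen : IsOpen I := isOpen_Ioo.inter (hU.preimage hφc)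
  have hτI : τ ∈ I := ⟨hτ, hmem⟩
  have hdiff : DifferentiableOn ℝ f U := hf2.differentiableOn (by norm_num)
  have hb : ∀ t ∈ I, fderiv ℝ f (φ t) v = b := by
    intro t ht
    have hfd : DifferentiableAt ℝ f (φ t) :=
      (hdiff (φ t) ht.2).differentiableAt (hU.mem_nhds ht.2)
    have h1 : HasDerivAt (fun u => f (φ u)) (fderiv ℝ f (φ t) v) t :=
      hfd.hasFDerivAt.comp_hasDerivAt t (hφd t)
    have h2 : HasDerivAt (fun u => f (φ u)) b t := by
      have haffd : HasDerivAt (fun u : ℝ => c0 + u * b) b t := by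
        simpa using ((hasDerivAt_id t).mul_const b).const_add c0
      have hev : (fun u => f (φ u)) =ᶠ[nhds t] (fun u : ℝ => c0 + u * b) :=
        Filter.eventually_of_mem (hIopen.mem_nhds ht) (fun u hu => haff u hu.1)
      exact haffd.congr_of_eventuallyEq hev
    exact h1.unique h2
  have hcda : ContDiffAt ℝ 2 f (φ τ) := hf2.contDiffAt (hU.mem_nhds hmem)
  have hBd : DifferentiableAt ℝ (fderiv ℝ f) (φ τ) := by
    have h1 : ContDiffAt ℝ 1 (fderiv ℝ f) (φ τ) :=
      hcda.fderiv_right (by norm_num)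
    exact h1.differentiableAt (by norm_num)
  set B := fderiv ℝ (fderiv ℝ f) (φ τ) with hB
  have hc : HasDerivAt (fun t => fderiv ℝ f (φ t)) (B v) τ :=
    hBd.hasFDerivAt.comp_hasDerivAt τ (hφd τ)
  have h3 : HasDerivAt (fun t => fderiv ℝ f (φ t) v) (B v v) τ := by
    simpa using hc.clm_apply (hasDerivAt_const τ v)
  have h4 : HasDerivAt (fun t => fderiv ℝ f (φ t) v) 0 τ := by
    have hev : (fun t => fderiv ℝ f (φ t) v) =ᶠ[nhds τ] (fun _ : ℝ => b) :=
      Filter.eventually_of_mem (hIopen.mem_nhds hτI) (fun u hu => hb u hu)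
    exact (hasDerivAt_const τ b).congr_of_eventuallyEq hev
  have h5 : B v v = 0 := h3.unique h4
  rw [iteratedFDeriv_two_apply]
  simpa using h5

/-- With `f` convex, C² with positive definite Hessian on `int(dom f)`, `J` convex
continuous, and `x̄` a minimizer of `Θ(x) = f(Φx) + μJ(x)` with `Φx̄ ∈ int(dom f)`:
`x̄` is the unique minimizer of `Θ` iff `x̄` is the unique minimizer of `J` over
`{x : Φx = Φx̄}`. -/
theorem unique_penalized_iff_unique_constrained
    {n m : ℕ}
    (f : EuclideanSpace ℝ (Fin m) → ℝ) (s : Set (EuclideanSpace ℝ (Fin m)))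
    (J : EuclideanSpace ℝ (Fin n) → ℝ)
    (Φ : EuclideanSpace ℝ (Fin n) →ₗ[ℝ] EuclideanSpace ℝ (Fin m))
    (μ : ℝ) (hμ : 0 < μ)
    (hf : ConvexOn ℝ s f)
    (hf2 : ContDiffOn ℝ 2 f (interior s))
    (hfpd : ∀ z ∈ interior s, ∀ v : EuclideanSpace ℝ (Fin m), v ≠ 0 →
      0 < (iteratedFDeriv ℝ 2 f z) ![v, v])
    (hJ : ConvexOn ℝ Set.univ J) (hJc : Continuous J)
    (xb : EuclideanSpace ℝ (Fin n)) (hxb : Φ xb ∈ interior s)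
    (hmin : ∀ x, Φ x ∈ s → f (Φ xb) + μ * J xb ≤ f (Φ x) + μ * J x) :
    (∀ x, Φ x ∈ s → x ≠ xb → f (Φ xb) + μ * J xb < f (Φ x) + μ * J x) ↔
    (∀ x, Φ x = Φ xb → x ≠ xb → J xb < J x) := by
  have hxbs : Φ xb ∈ s := interior_subset hxb
  constructor
  · intro h x hΦ hne
    have hs : Φ x ∈ s := hΦ ▸ hxbs
    have := h x hs hne
    rw [hΦ] at this
    have h2 : μ * J xb < μ * J x := by linarith
    exact (mul_lt_mul_iff_right₀ hμ).mp h2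
  · intro h x hxs hne
    by_contra hlt
    push_neg at hlt
    have heq : f (Φ x) + μ * J x = f (Φ xb) + μ * J xb :=
      le_antisymm hlt (hmin x hxs)
    by_cases hΦ : Φ x = Φ xb
    · have hJJ : J xb < J x := h x hΦ hne
      rw [hΦ] at heq
      nlinarith
    · set v : EuclideanSpace ℝ (Fin m) := Φ x - Φ xb with hv
      have hvne : v ≠ 0 := sub_ne_zero.mpr hΦ
      -- affine along the segment
      have haff : ∀ t ∈ Set.Ioo (0:ℝ) 1,
          f (Φ xb + t • v) = f (Φ xb) + t * (f (Φ x) - f (Φ xb)) := by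
        intro t ht
        obtain ⟨ht0, ht1⟩ := ht
        set xt : EuclideanSpace ℝ (Fin n) := (1 - t) • xb + t • x with hxt
        have hΦxt : Φ xt = (1 - t) • Φ xb + t • Φ x := by
          simp [hxt, map_add, map_smul]
        have hΦxt' : Φ xt = Φ xb + t • v := by
          rw [hΦxt, hv]; module
        have hmem : Φ xt ∈ s := by
          rw [hΦxt]
          exact hf.1 hxbs hxs (by linarith) ht0.le (by ring)
        have hfle : f (Φ xt) ≤ (1 - t) * f (Φ xb) + t * f (Φ x) := by
          rw [hΦxt]
          exact hf.2 hxbs hxs (by linarith) ht0.le (by ring)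
        have hJle : J xt ≤ (1 - t) * J xb + t * J x :=
          hJ.2 (Set.mem_univ xb) (Set.mem_univ x) (by linarith) ht0.le (by ring)
        have hmin' : f (Φ xb) + μ * J xb ≤ f (Φ xt) + μ * J xt := hmin xt hmem
        have hμJ : μ * J xt ≤ μ * ((1 - t) * J xb + t * J x) :=
          mul_le_mul_of_nonneg_left hJle hμ.le
        have hfeq : f (Φ xt) = f (Φ xb) + t * (f (Φ x) - f (Φ xb)) := by nlinarith
        rw [← hΦxt']
        exact hfeq
      -- pick τ small enough that Φ xb + τ • v ∈ interior s
      obtain ⟨ε, hε, hball⟩ := Metric.isOpen_iff.mp isOpen_interior _ hxb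
      set τ : ℝ := min (ε / (2 * (‖v‖ + 1))) (1 / 2) with hτdef
      have hvpos : (0:ℝ) < ‖v‖ + 1 := by positivity
      have hτpos : 0 < τ := lt_min (by positivity) (by norm_num)
      have hτIoo : τ ∈ Set.Ioo (0:ℝ) 1 :=
        ⟨hτpos, lt_of_le_of_lt (min_le_right _ _) (by norm_num)⟩
      have hmem : Φ xb + τ • v ∈ interior s := by
        apply hball
        rw [Metric.mem_ball, dist_eq_norm]
        have h1 : ‖Φ xb + τ • v - Φ xb‖ = τ * ‖v‖ := by
          rw [add_sub_cancel_left, norm_smul, Real.norm_eq_abs, abs_of_pos hτpos]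
        rw [h1]
        have h2 : τ ≤ ε / (2 * (‖v‖ + 1)) := min_le_left _ _
        have h3 : τ * ‖v‖ ≤ ε / (2 * (‖v‖ + 1)) * ‖v‖ :=
          mul_le_mul_of_nonneg_right h2 (norm_nonneg v)
        have h4 : ε / (2 * (‖v‖ + 1)) * ‖v‖ < ε := by
          rw [div_mul_eq_mul_div, div_lt_iff₀ (by positivity)]
          nlinarith [norm_nonneg v]
        linarith
      have hzero : iteratedFDeriv ℝ 2 f (Φ xb + τ • v) ![v, v] = 0 :=
        second_deriv_zero_of_affine_on_line isOpen_interior hf2 hτIoo hmem haff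
      have hpos := hfpd _ hmem v hvne
      rw [hzero] at hpos
      exact lt_irrefl 0 hpos
end

section
/- In ℝ³ with J(x) = √(x₁² + x₂²) + |x₃|, x₀ = (0,1,0), and Φ = [[1,1,0],[1,0,−1]], the point x₀ is the unique minimizer of J over {x : Φx = Φx₀}; moreover x₀ is a strong but not a sharp minimizer of this constrained problem. -/
private lemma sqrt_lb (t : ℝ) (ht0 : 0 ≤ t) (ht4 : t ≤ 4) :
    1 - t + t ^ 2 / 2 ≤ Real.sqrt (t ^ 2 + (1 - t) ^ 2) := by
  have hs := Real.sq_sqrt (show (0:ℝ) ≤ t ^ 2 + (1 - t) ^ 2 by positivity)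
  have hs0 := Real.sqrt_nonneg (t ^ 2 + (1 - t) ^ 2)
  set s := Real.sqrt (t ^ 2 + (1 - t) ^ 2) with hsdef
  have hR : 0 ≤ 1 - t + t ^ 2 / 2 := by nlinarith [sq_nonneg (t - 1)]
  nlinarith [mul_nonneg (pow_nonneg ht0 3) (by linarith : (0:ℝ) ≤ 4 - t),
    sq_nonneg (s - (1 - t + t ^ 2 / 2)), mul_nonneg hs0 hR]

private lemma sqrt_ub (t : ℝ) (ht0 : 0 ≤ t) (ht1 : t ≤ 1) :
    Real.sqrt (t ^ 2 + (1 - t) ^ 2) ≤ 1 - t + t ^ 2 := by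
  have hR : 0 ≤ 1 - t + t ^ 2 := by nlinarith
  have h := Real.sqrt_le_sqrt (show t ^ 2 + (1 - t) ^ 2 ≤ (1 - t + t ^ 2) ^ 2 by nlinarith [sq_nonneg (t * (1 - t))])
  rwa [Real.sqrt_sq hR] at h

private lemma basic_lb (t : ℝ) : 1 ≤ Real.sqrt (t ^ 2 + (1 - t) ^ 2) + |t| := by
  have h1 : |1 - t| ≤ Real.sqrt (t ^ 2 + (1 - t) ^ 2) := by
    rw [show |1 - t| = Real.sqrt ((1 - t) ^ 2) from (Real.sqrt_sq_eq_abs _).symm]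
    exact Real.sqrt_le_sqrt (by nlinarith [sq_nonneg t])
  have h2 : (1:ℝ) ≤ |1 - t| + |t| := by
    calc (1:ℝ) = |(1 - t) + t| := by norm_num
    _ ≤ |1 - t| + |t| := abs_add_le _ _
  linarith

private lemma strict_lb (t : ℝ) (ht : t ≠ 0) : 1 < Real.sqrt (t ^ 2 + (1 - t) ^ 2) + |t| := by
  have h1 : |1 - t| < Real.sqrt (t ^ 2 + (1 - t) ^ 2) := by
    rw [show |1 - t| = Real.sqrt ((1 - t) ^ 2) from (Real.sqrt_sq_eq_abs _).symm]
    apply Real.sqrt_lt_sqrt (sq_nonneg _)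
    have : 0 < t ^ 2 := by positivity
    linarith
  have h2 : (1:ℝ) ≤ |1 - t| + |t| := by
    calc (1:ℝ) = |(1 - t) + t| := by norm_num
    _ ≤ |1 - t| + |t| := abs_add_le _ _
  linarith

/-- In ℝ³ with `J(x) = √(x₁² + x₂²) + |x₃|`, `x₀ = (0,1,0)` and
`Φ = [[1,1,0],[1,0,−1]]` (so the feasible set is `{x : x₁+x₂ = 1, x₁−x₃ = 0}`),
the point `x₀` is the unique minimizer of `J` over the feasible set; it is a
strong but not a sharp minimizer of the constrained problem. -/
theorem group_sparsity_unique_strong_not_sharp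
    (J : EuclideanSpace ℝ (Fin 3) → ℝ)
    (hJ : ∀ x, J x = Real.sqrt ((x 0) ^ 2 + (x 1) ^ 2) + |x 2|)
    (x₀ : EuclideanSpace ℝ (Fin 3))
    (h0 : x₀ 0 = 0) (h1 : x₀ 1 = 1) (h2 : x₀ 2 = 0) :
    (∀ x, x 0 + x 1 = 1 → x 0 - x 2 = 0 → J x₀ ≤ J x) ∧
    (∀ x, x 0 + x 1 = 1 → x 0 - x 2 = 0 → J x = J x₀ → x = x₀) ∧
    (∃ κ > (0 : ℝ), ∃ δ > (0 : ℝ), ∀ x, x 0 + x 1 = 1 → x 0 - x 2 = 0 →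
      ‖x - x₀‖ ≤ δ → J x ≥ J x₀ + κ / 2 * ‖x - x₀‖ ^ 2) ∧
    ¬ ∃ c > (0 : ℝ), ∃ ε > (0 : ℝ), ∀ x, x 0 + x 1 = 1 → x 0 - x 2 = 0 →
      ‖x - x₀‖ ≤ ε → J x ≥ J x₀ + c * ‖x - x₀‖ := by
  have hJ0 : J x₀ = 1 := by
    rw [hJ, h0, h1, h2]
    norm_num
  -- key parametrization
  have key : ∀ x : EuclideanSpace ℝ (Fin 3), x 0 + x 1 = 1 → x 0 - x 2 = 0 →
      J x = Real.sqrt ((x 0) ^ 2 + (1 - x 0) ^ 2) + |x 0| ∧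
      ‖x - x₀‖ = Real.sqrt 3 * |x 0| := by
    intro x ha hb
    have h1' : x 1 = 1 - x 0 := by linarith
    have h2' : x 2 = x 0 := by linarith
    refine ⟨by rw [hJ, h1', h2'], ?_⟩
    rw [EuclideanSpace.norm_eq]
    have hsub : ∀ i : Fin 3, (x - x₀) i = x i - x₀ i := fun i => rfl
    rw [Fin.sum_univ_three, hsub 0, hsub 1, hsub 2, h0, h1, h2, h1', h2']
    have : x 0 - 0 = x 0 := by ring
    rw [this, show (1 - x 0 - 1) = -(x 0) by ring]
    rw [Real.norm_eq_abs, Real.norm_eq_abs, abs_neg]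
    rw [show |x 0| ^ 2 + |x 0| ^ 2 + |x 0| ^ 2 = 3 * (x 0) ^ 2 by rw [sq_abs]; ring]
    rw [Real.sqrt_mul (by norm_num), Real.sqrt_sq_eq_abs]
  refine ⟨?_, ?_, ?_, ?_⟩
  · intro x ha hb
    obtain ⟨hJx, -⟩ := key x ha hb
    rw [hJx, hJ0]
    exact basic_lb _
  · intro x ha hb heq
    obtain ⟨hJx, -⟩ := key x ha hb
    rw [hJx, hJ0] at heq
    have ht : x 0 = 0 := by
      by_contra ht
      exact absurd heq (ne_of_gt (strict_lb _ ht))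
    have h1' : x 1 = 1 - x 0 := by linarith
    have h2' : x 2 = x 0 := by linarith
    refine PiLp.ext fun i => ?_
    fin_cases i
    · show x 0 = x₀ 0; rw [ht, h0]
    · show x 1 = x₀ 1; rw [h1', ht, h1]; norm_num
    · show x 2 = x₀ 2; rw [h2', ht, h2]
  · refine ⟨1/3, by norm_num, 1, by norm_num, ?_⟩
    intro x ha hb hn
    obtain ⟨hJx, hnx⟩ := key x ha hb
    set t := x 0 with htdef
    have hs3 : (1:ℝ) ≤ Real.sqrt 3 := by
      rw [show (1:ℝ) = Real.sqrt 1 from (Real.sqrt_one).symm]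
      exact Real.sqrt_le_sqrt (by norm_num)
    have htle : |t| ≤ 1 := by
      nlinarith [abs_nonneg t, hnx ▸ hn]
    rw [hJx, hJ0, hnx]
    have hs3sq : Real.sqrt 3 ^ 2 = 3 := Real.sq_sqrt (by norm_num)
    rw [mul_pow, hs3sq, sq_abs]
    -- goal: sqrt(t²+(1-t)²)+|t| ≥ 1 + 1/3/2 * (3*t²)
    rcases le_or_gt 0 t with htpos | htneg
    · have := sqrt_lb t htpos (by rw [abs_of_nonneg htpos] at htle; linarith)
      rw [abs_of_nonneg htpos]
      nlinarith
    · have h := basic_lb t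
      rw [abs_of_neg htneg] at htle ⊢
      have h1' : |1 - t| ≤ Real.sqrt (t ^ 2 + (1 - t) ^ 2) := by
        rw [show |1 - t| = Real.sqrt ((1 - t) ^ 2) from (Real.sqrt_sq_eq_abs _).symm]
        exact Real.sqrt_le_sqrt (by nlinarith [sq_nonneg t])
      rw [abs_of_pos (by linarith : (0:ℝ) < 1 - t)] at h1'
      nlinarith
  · rintro ⟨c, hc, ε, hε, h⟩
    set t := min (ε/2) c with htdef
    have ht0 : 0 < t := lt_min (by linarith) hc
    have htε : t ≤ ε/2 := min_le_left _ _
    have htc : t ≤ c := min_le_right _ _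
    have ht1 : t ≤ 1 ∨ True := Or.inr trivial
    set x : EuclideanSpace ℝ (Fin 3) := WithLp.toLp 2 ![min t 1, 1 - min t 1, min t 1] with hxdef
    set u := min t 1 with hudef
    have hu0 : 0 < u := lt_min ht0 one_pos
    have hu1 : u ≤ 1 := min_le_right _ _
    have hut : u ≤ t := min_le_left _ _
    have hx0 : x 0 = u := rfl
    have hx1 : x 1 = 1 - u := rfl
    have hx2 : x 2 = u := rfl
    have ha : x 0 + x 1 = 1 := by rw [hx0, hx1]; ring
    have hb : x 0 - x 2 = 0 := by rw [hx0, hx2]; ring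
    obtain ⟨hJx, hnx⟩ := key x ha hb
    rw [hx0] at hJx hnx
    have hs3 : Real.sqrt 3 ≤ 2 := by
      rw [show (2:ℝ) = Real.sqrt 4 by rw [show (4:ℝ) = 2^2 by norm_num, Real.sqrt_sq]; norm_num]
      exact Real.sqrt_le_sqrt (by norm_num)
    have hs3' : (1:ℝ) ≤ Real.sqrt 3 := by
      rw [show (1:ℝ) = Real.sqrt 1 from (Real.sqrt_one).symm]
      exact Real.sqrt_le_sqrt (by norm_num)
    have hnε : ‖x - x₀‖ ≤ ε := by
      rw [hnx, abs_of_pos hu0]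
      calc Real.sqrt 3 * u ≤ 2 * u := by nlinarith
      _ ≤ 2 * (ε/2) := by nlinarith [le_trans hut htε]
      _ = ε := by ring
    have hge := h x ha hb hnε
    rw [hJx, hJ0, hnx, abs_of_pos hu0] at hge
    have hub := sqrt_ub u hu0.le hu1
    have hs3'' : (1:ℝ) < Real.sqrt 3 := by
      rw [show (1:ℝ) = Real.sqrt 1 from (Real.sqrt_one).symm]
      exact Real.sqrt_lt_sqrt (by norm_num) (by norm_num)
    -- hge : sqrt(u²+(1-u)²) + u ≥ 1 + c * (√3 * u), hub : sqrt ≤ 1 - u + u²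
    have huc : u ≤ c := le_trans hut htc
    nlinarith [mul_pos hc hu0, hs3'']
end

section
/- For the ℓ₁ regularized problem, uniqueness equals sharpness: if J₀ is a polyhedral norm on ℝᵖ (e.g., the ℓ₁ norm), D : ℝᵖ → ℝⁿ linear, J = J₀ ∘ D*, and Φ linear with y₀ = Φx₀, then x₀ is the unique minimizer of min{J(x) : Φx = y₀} if and only if x₀ is a sharp minimizer of this problem. -/
/-!
Near `x₀`, a maximum of finitely many affine functions equals its value at `x₀` plus the maximum
of the linear parts of the pieces active at `x₀`; this is a continuous positively homogeneous
function `f`. Uniqueness of the minimizer on `x₀ + ker Φ` forces `f > 0` on the nonzero kernel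
directions, and minimizing `f` over the compact unit sphere of `ker Φ` gives `f h ≥ c ‖h‖` there,
i.e. sharpness. Conversely, for a convex function a locally sharp minimizer is a strict global
minimizer: compare with a point of the segment close to `x₀`.
-/

open RealInnerProductSpace Filter Topology Metric

theorem ConvexOn.finset_sup' {𝕜 E β ι : Type*} [Semiring 𝕜] [PartialOrder 𝕜] [AddCommMonoid E]
    [AddCommMonoid β] [LinearOrder β] [IsOrderedAddMonoid β] [SMul 𝕜 E] [Module 𝕜 β]
    [PosSMulStrictMono 𝕜 β] {S : Set E} {s : Finset ι} (hs : s.Nonempty) {f : ι → E → β}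
    (hf : ∀ i ∈ s, ConvexOn 𝕜 S (f i)) : ConvexOn 𝕜 S fun x => s.sup' hs fun i => f i x := by
  simpa only [← Finset.sup'_apply] using Finset.sup'_induction hs f (fun _ h₁ _ h₂ => h₁.sup h₂) hf

variable {E : Type*} [NormedAddCommGroup E] [NormedSpace ℝ E]

theorem ConvexOn.lt_of_forall_lt_of_norm_sub_le {S : Set E} {F : E → ℝ} (hF : ConvexOn ℝ S F)
    {x₀ x : E} (hx₀ : x₀ ∈ S) (hx : x ∈ S) (hne : x ≠ x₀) {ε : ℝ} (hε : 0 < ε)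
    (hloc : ∀ y ∈ S, y ≠ x₀ → ‖y - x₀‖ ≤ ε → F x₀ < F y) : F x₀ < F x := by
  have hd : 0 < ‖x - x₀‖ := norm_pos_iff.2 (sub_ne_zero.2 hne)
  set t := min 1 (ε / ‖x - x₀‖)
  have ht : 0 < t := lt_min one_pos (div_pos hε hd)
  have ht₁ : t ≤ 1 := min_le_left _ _
  set y := (1 - t) • x₀ + t • x
  have hy : y - x₀ = t • (x - x₀) := by module
  have hyε : ‖y - x₀‖ ≤ ε := by
    rw [hy, norm_smul, Real.norm_of_nonneg ht.le]
    calc t * ‖x - x₀‖ ≤ ε / ‖x - x₀‖ * ‖x - x₀‖ := by gcongr; exact min_le_right _ _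
      _ = ε := div_mul_cancel₀ ε hd.ne'
  have hyx₀ : y ≠ x₀ := by
    rw [← sub_ne_zero, hy]; exact smul_ne_zero ht.ne' (sub_ne_zero.2 hne)
  have hlt := hloc y (hF.1 hx₀ hx (by linarith) ht.le (by ring)) hyx₀ hyε
  have hle : F y ≤ (1 - t) * F x₀ + t * F x := hF.2 hx₀ hx (by linarith) ht.le (by ring)
  exact lt_of_mul_lt_mul_left (by linarith) ht.le

def IsLocallyConicAt (F : E → ℝ) (x₀ : E) : Prop :=
  ∃ f : E → ℝ, Continuous f ∧ (∀ t : ℝ, 0 ≤ t → ∀ h, f (t • h) = t * f h) ∧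
    ∀ᶠ h in 𝓝 0, F (x₀ + h) = F x₀ + f h

theorem isLocallyConicAt_finset_sup' {ι : Type*} {s : Finset ι} (hs : s.Nonempty)
    (ℓ : ι → E →L[ℝ] ℝ) (b : ι → ℝ) (x₀ : E) :
    IsLocallyConicAt (fun x => s.sup' hs fun i => ℓ i x + b i) x₀ := by
  classical
  set c : ι → ℝ := fun i => ℓ i x₀ + b i
  set M := s.sup' hs c
  set A := s.filter fun i => c i = M
  have hA : A.Nonempty := by
    obtain ⟨i, hi, hiM⟩ := Finset.exists_mem_eq_sup' hs c
    exact ⟨i, Finset.mem_filter.2 ⟨hi, hiM.symm⟩⟩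
  set f : E → ℝ := fun h => A.sup' hA fun i => ℓ i h
  have hf : Continuous f := Continuous.finset_sup'_apply hA fun i _ => (ℓ i).continuous
  have hf₀ : f 0 = 0 := by simp [f]
  refine ⟨f, hf, fun t ht h => ?_, ?_⟩
  · simp only [f, map_smul, smul_eq_mul]
    exact (Finset.apply_sup'_eq_sup'_comp hA (t * ·) fun x y => mul_max_of_nonneg x y ht).symm
  · have hinactive : ∀ᶠ h in 𝓝 0, ∀ i ∈ s, c i ≠ M → c i + ℓ i h < M + f h := by
      refine (eventually_all_finset s).2 fun i hi => ?_
      by_cases hiM : c i = M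
      · exact .of_forall fun _ h => absurd hiM h
      have hlt : c i + ℓ i 0 < M + f 0 := by
        simpa [hf₀] using lt_of_le_of_ne (Finset.le_sup' c hi) hiM
      filter_upwards [((ℓ i).continuous.const_add (c i)).continuousAt.eventually_lt
        (hf.const_add M).continuousAt hlt] with h hh _ using hh
    filter_upwards [hinactive] with h hh
    have hsplit : ∀ i, ℓ i (x₀ + h) + b i = c i + ℓ i h := fun i => by simp only [c, map_add]; ring
    simp only [hsplit]
    apply le_antisymm
    · refine Finset.sup'_le hs _ fun i hi => ?_
      by_cases hiA : c i = M
      · rw [hiA]; gcongr; exact Finset.le_sup' (fun i => ℓ i h) (Finset.mem_filter.2 ⟨hi, hiA⟩)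
      · exact (hh i hi hiA).le
    · obtain ⟨j, hj, hfj⟩ := Finset.exists_mem_eq_sup' hA fun i => ℓ i h
      obtain ⟨hjs, hjM⟩ := Finset.mem_filter.1 hj
      calc M + f h = c j + ℓ j h := by rw [hjM]; exact congrArg _ hfj
        _ ≤ _ := Finset.le_sup' (fun i => c i + ℓ i h) hjs

theorem exists_pos_mul_norm_le_of_forall_pos [FiniteDimensional ℝ E] (K : Submodule ℝ E)
    {f : E → ℝ} (hf : Continuous f) (hhom : ∀ t : ℝ, 0 ≤ t → ∀ h, f (t • h) = t * f h)
    (hpos : ∀ h ∈ K, h ≠ 0 → 0 < f h) : ∃ c > 0, ∀ h ∈ K, c * ‖h‖ ≤ f h := by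
  have hf₀ : f 0 = 0 := by simpa using hhom 0 le_rfl 0
  set S := sphere (0 : E) 1 ∩ K
  have hunit : ∀ h ∈ K, h ≠ 0 → ‖h‖⁻¹ • h ∈ S ∧ f h = ‖h‖ * f (‖h‖⁻¹ • h) := by
    intro h hK hh
    have hn : ‖h‖ ≠ 0 := norm_ne_zero_iff.2 hh
    refine ⟨⟨?_, K.smul_mem _ hK⟩, ?_⟩
    · simp [norm_smul, hn]
    · rw [← hhom _ (norm_nonneg h), smul_smul, mul_inv_cancel₀ hn, one_smul]
  rcases S.eq_empty_or_nonempty with hS | hS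
  · refine ⟨1, one_pos, fun h hK => ?_⟩
    by_cases hh : h = 0
    · simp [hh, hf₀]
    · exact absurd (hunit h hK hh).1 (hS ▸ Set.notMem_empty _)
  · have hScomp : IsCompact S := (isCompact_sphere 0 1).inter_right K.closed_of_finiteDimensional
    obtain ⟨u, ⟨hu, huK⟩, humin⟩ := hScomp.exists_isMinOn hS hf.continuousOn
    have hu₀ : u ≠ 0 := ne_zero_of_mem_unit_sphere ⟨u, hu⟩
    refine ⟨f u, hpos u huK hu₀, fun h hK => ?_⟩
    by_cases hh : h = 0
    · simp [hh, hf₀]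
    · obtain ⟨hS', hfh⟩ := hunit h hK hh
      rw [hfh, mul_comm]
      exact mul_le_mul_of_nonneg_left (humin hS') (norm_nonneg h)

theorem IsLocallyConicAt.exists_sharp [FiniteDimensional ℝ E] {F : E → ℝ} {x₀ : E}
    (hF : IsLocallyConicAt F x₀) (K : Submodule ℝ E)
    (hmin : ∀ h ∈ K, h ≠ 0 → F x₀ < F (x₀ + h)) :
    ∃ c > 0, ∃ ε > 0, ∀ h ∈ K, ‖h‖ ≤ ε → F x₀ + c * ‖h‖ ≤ F (x₀ + h) := by
  obtain ⟨f, hf, hhom, hloc⟩ := hF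
  obtain ⟨ε, hε, hεF⟩ := nhds_basis_closedBall.eventually_iff.1 hloc
  have hpos : ∀ h ∈ K, h ≠ 0 → 0 < f h := by
    intro h hK hh
    have hn : 0 < ‖h‖ := norm_pos_iff.2 hh
    have ht : 0 ≤ ε / ‖h‖ := by positivity
    have hth : ‖(ε / ‖h‖) • h‖ = ε := by
      rw [norm_smul, Real.norm_of_nonneg ht, div_mul_cancel₀ ε hn.ne']
    have hlt := hmin ((ε / ‖h‖) • h) (K.smul_mem _ hK) (smul_ne_zero (by positivity) hh)
    rw [hεF (mem_closedBall_zero_iff.2 hth.le), hhom _ ht] at hlt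
    exact pos_of_mul_pos_right (by linarith) ht
  obtain ⟨c, hc, hcf⟩ := exists_pos_mul_norm_le_of_forall_pos K hf hhom hpos
  refine ⟨c, hc, ε, hε, fun h hK hh => ?_⟩
  rw [hεF (mem_closedBall_zero_iff.2 hh)]
  linarith [hcf h hK]

theorem convexOn_finset_sup' {ι : Type*} {s : Finset ι} (hs : s.Nonempty)
    (ℓ : ι → E →L[ℝ] ℝ) (b : ι → ℝ) :
    ConvexOn ℝ Set.univ fun x => s.sup' hs fun i => ℓ i x + b i :=
  ConvexOn.finset_sup' hs fun i _ => ((ℓ i : E →ₗ[ℝ] ℝ).convexOn convex_univ).add_const (b i)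

theorem unique_iff_sharp_polyhedral_general
    {p n m : ℕ}
    (V : Finset (EuclideanSpace ℝ (Fin p))) (hV : V.Nonempty)
    (J₀ : EuclideanSpace ℝ (Fin p) → ℝ)
    (hJ₀ : ∀ u, J₀ u = V.sup' hV fun v => ⟪v, u⟫)
    (Dstar : EuclideanSpace ℝ (Fin n) →ₗ[ℝ] EuclideanSpace ℝ (Fin p))
    (Φ : EuclideanSpace ℝ (Fin n) →ₗ[ℝ] EuclideanSpace ℝ (Fin m))
    (x₀ : EuclideanSpace ℝ (Fin n)) :
    (∀ x, Φ x = Φ x₀ → x ≠ x₀ → J₀ (Dstar x₀) < J₀ (Dstar x)) ↔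
    (∃ c > 0, ∃ ε > 0, ∀ x, Φ x = Φ x₀ → ‖x - x₀‖ ≤ ε →
      J₀ (Dstar x) ≥ J₀ (Dstar x₀) + c * ‖x - x₀‖) := by
  set ℓ : EuclideanSpace ℝ (Fin p) → EuclideanSpace ℝ (Fin n) →L[ℝ] ℝ :=
    fun v => (innerSL ℝ v).comp Dstar.toContinuousLinearMap
  set F := fun x => V.sup' hV fun v => ℓ v x + 0
  have hF : ∀ x, J₀ (Dstar x) = F x := fun x => by simp [F, ℓ, hJ₀]
  have hker : ∀ x, Φ x = Φ x₀ ↔ x - x₀ ∈ LinearMap.ker Φ := fun x => by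
    rw [LinearMap.mem_ker, map_sub, sub_eq_zero]
  simp only [hF]
  constructor
  · intro huniq
    obtain ⟨c, hc, ε, hε, hsharp⟩ := (isLocallyConicAt_finset_sup' hV ℓ 0 x₀).exists_sharp
      (LinearMap.ker Φ) fun h hK hh => huniq (x₀ + h) (by simpa [hker] using hK) (by simpa using hh)
    refine ⟨c, hc, ε, hε, fun x hx hxε => ?_⟩
    have hx' := hsharp (x - x₀) ((hker x).1 hx) hxε
    rwa [add_sub_cancel] at hx'
  · rintro ⟨c, hc, ε, hε, hsharp⟩ x hx hne
    have hconv : ConvexOn ℝ {x | Φ x = Φ x₀} F :=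
      (convexOn_finset_sup' hV ℓ 0).subset (Set.subset_univ _)
        ((convex_singleton (Φ x₀)).linear_preimage Φ)
    refine hconv.lt_of_forall_lt_of_norm_sub_le rfl hx hne hε fun y hy hyne hyε => ?_
    have hFy := hsharp y hy hyε
    have hgap : 0 < c * ‖y - x₀‖ := mul_pos hc (norm_pos_iff.2 (sub_ne_zero.2 hyne))
    linarith

/-- For a polyhedral norm `J₀` (the maximum of finitely many linear functionals,
symmetric and positive off the origin, e.g. the ℓ₁ norm) and `J = J₀ ∘ D*`,
the point `x₀` is the unique minimizer of `min{J(x) : Φx = Φx₀}` iff it is a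
sharp minimizer of this problem. -/
theorem unique_iff_sharp_polyhedral
    {p n m : ℕ}
    (V : Finset (EuclideanSpace ℝ (Fin p))) (hV : V.Nonempty)
    (hsymm : ∀ v ∈ V, -v ∈ V)
    (J₀ : EuclideanSpace ℝ (Fin p) → ℝ)
    (hJ₀ : ∀ u, J₀ u = V.sup' hV fun v => ⟪v, u⟫)
    (hpos : ∀ u, u ≠ 0 → 0 < J₀ u)
    (Dstar : EuclideanSpace ℝ (Fin n) →ₗ[ℝ] EuclideanSpace ℝ (Fin p))
    (Φ : EuclideanSpace ℝ (Fin n) →ₗ[ℝ] EuclideanSpace ℝ (Fin m))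
    (x₀ : EuclideanSpace ℝ (Fin n)) :
    (∀ x, Φ x = Φ x₀ → x ≠ x₀ → J₀ (Dstar x₀) < J₀ (Dstar x)) ↔
    (∃ c > 0, ∃ ε > 0, ∀ x, Φ x = Φ x₀ → ‖x - x₀‖ ≤ ε →
      J₀ (Dstar x) ≥ J₀ (Dstar x₀) + c * ‖x - x₀‖) :=
  unique_iff_sharp_polyhedral_general V hV J₀ hJ₀ Dstar Φ x₀
end
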